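/- Let σ(z) = max{0, z} (ReLU) and fix L, δ, R > 0. For any L-Lipschitz function f : ℝ → ℝ which is constant outside the interval [−R, R], there exist an integer w ≤ 3RL/δ, a scalar a, and scalars α_1, …, α_w, β_1, …, β_w with |α_i| ≤ 2L, such that the function h(x) = a + ∑_{i=1}^w α_i·σ(x − β_i) is L-Lipschitz and satisfies sup_{x∈ℝ} |f(x) − h(x)| ≤ δ. -/

import Mathlib

/-!
Take the piecewise linear interpolant of `f` at `n + 1` equally spaced knots of `[-R, R]`,
`n = ⌈RL/δ⌉`, extended by constants. Between consecutive knots it is a combination of two ReLUs,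
so it is a ReLU sum with one neuron per knot, whose coefficient is the jump of the slope there,
at most `2L`. Its slopes are slopes of chords of `f`, so it is `L`-Lipschitz, and on a cell of
width `s` an `L`-Lipschitz function differs from its chord by at most `Ls/2 = LR/n ≤ δ`.
When `RL < δ` the constant `(f(-R) + f(R))/2` already works, with no neuron at all.
-/

open Finset

noncomputable def ramp (p q x : ℝ) : ℝ := max 0 (x - p) - max 0 (x - q)

section Ramp

variable {p q r x y : ℝ}

lemma ramp_of_le (hxp : x ≤ p) (hpq : p ≤ q) : ramp p q x = 0 := by
  simp [ramp, hxp, hxp.trans hpq]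

lemma ramp_of_ge (hpq : p ≤ q) (hqx : q ≤ x) : ramp p q x = q - p := by
  simp [ramp, hqx, hpq.trans hqx]

lemma ramp_of_mem_Icc (hx : x ∈ Set.Icc p q) : ramp p q x = x - p := by
  simp [ramp, hx.1, hx.2]

lemma ramp_add_ramp : ramp p q x + ramp q r x = ramp p r x := by
  simp only [ramp]; ring

lemma ramp_self : ramp p p x = 0 := sub_self _

lemma monotone_ramp (hpq : p ≤ q) : Monotone (ramp p q) := by
  intro y x hyx
  simp only [ramp, max_def]
  split_ifs <;> linarith

lemma ramp_sub_ramp_le (hpq : p ≤ q) (hyx : y ≤ x) : ramp p q x - ramp p q y ≤ x - y := by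
  simp only [ramp, max_def]
  split_ifs <;> linarith

end Ramp

lemma sum_range_ramp (t : ℕ → ℝ) (n : ℕ) (x : ℝ) :
    ∑ i ∈ range n, ramp (t i) (t (i + 1)) x = ramp (t 0) (t n) x := by
  induction n with
  | zero => simp [ramp_self]
  | succ n ih => rw [sum_range_succ, ih, ramp_add_ramp]

lemma abs_sum_mul_ramp_sub_le {t c : ℕ → ℝ} {n : ℕ} {L : ℝ} (ht : Monotone t)
    (hL : 0 ≤ L) (hc : ∀ i < n, |c i| ≤ L) (x y : ℝ) :
    |∑ i ∈ range n, c i * ramp (t i) (t (i + 1)) x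
        - ∑ i ∈ range n, c i * ramp (t i) (t (i + 1)) y| ≤ L * |x - y| := by
  wlog hyx : y ≤ x generalizing x y
  · rw [abs_sub_comm, abs_sub_comm x]
    exact this y x (le_of_not_ge hyx)
  have hmono : ∀ i, 0 ≤ ramp (t i) (t (i + 1)) x - ramp (t i) (t (i + 1)) y := fun i =>
    sub_nonneg.2 (monotone_ramp (ht i.le_succ) hyx)
  calc _ = |∑ i ∈ range n, c i * (ramp (t i) (t (i + 1)) x - ramp (t i) (t (i + 1)) y)| := by
        simp only [mul_sub, sum_sub_distrib]
    _ ≤ ∑ i ∈ range n, L * (ramp (t i) (t (i + 1)) x - ramp (t i) (t (i + 1)) y) := by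
        refine (abs_sum_le_sum_abs _ _).trans (sum_le_sum fun i hi => ?_)
        rw [abs_mul, abs_of_nonneg (hmono i)]
        exact mul_le_mul_of_nonneg_right (hc i (mem_range.1 hi)) (hmono i)
    _ = L * (ramp (t 0) (t n) x - ramp (t 0) (t n) y) := by
        rw [← mul_sum, sum_sub_distrib, sum_range_ramp, sum_range_ramp]
    _ ≤ L * |x - y| := by
        rw [abs_of_nonneg (sub_nonneg.2 hyx)]
        exact mul_le_mul_of_nonneg_left (ramp_sub_ramp_le (ht (Nat.zero_le n)) hyx) hL

section Lipschitz

variable {f : ℝ → ℝ} {L : ℝ}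

lemma nonneg_of_lipschitz (hf : ∀ x y, |f x - f y| ≤ L * |x - y|) : 0 ≤ L := by
  simpa using (abs_nonneg _).trans (hf 1 0)

lemma abs_slope_le (hf : ∀ x y, |f x - f y| ≤ L * |x - y|) (a b : ℝ) :
    |slope f a b| ≤ L := by
  rcases eq_or_ne a b with rfl | hab
  · simpa using nonneg_of_lipschitz hf
  rw [slope_def_field, abs_div, div_le_iff₀ (abs_pos.2 (sub_ne_zero.2 hab.symm))]
  exact hf b a

lemma abs_sub_convex_comb_le (hf : ∀ x y, |f x - f y| ≤ L * |x - y|) {p q x μ : ℝ}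
    (hx : x ∈ Set.Icc p q) (hμ : μ ∈ Set.Icc 0 1) :
    |f x - ((1 - μ) * f p + μ * f q)| ≤ L * ((1 - μ) * (x - p) + μ * (q - x)) := by
  have h1 : 0 ≤ 1 - μ := sub_nonneg.2 hμ.2
  calc |f x - ((1 - μ) * f p + μ * f q)| = |(1 - μ) * (f x - f p) + μ * (f x - f q)| := by
        ring_nf
    _ ≤ (1 - μ) * |f x - f p| + μ * |f x - f q| := by
        refine (abs_add_le _ _).trans ?_
        rw [abs_mul, abs_mul, abs_of_nonneg h1, abs_of_nonneg hμ.1]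
    _ ≤ (1 - μ) * (L * (x - p)) + μ * (L * (q - x)) := by
        gcongr ?_ + ?_
        · exact mul_le_mul_of_nonneg_left
            (by simpa [abs_of_nonneg (sub_nonneg.2 hx.1)] using hf x p) h1
        · exact mul_le_mul_of_nonneg_left
            (by simpa [abs_sub_comm x, abs_of_nonneg (sub_nonneg.2 hx.2)] using hf x q) hμ.1
    _ = L * ((1 - μ) * (x - p) + μ * (q - x)) := by ring

lemma abs_sub_midpoint_le (hf : ∀ x y, |f x - f y| ≤ L * |x - y|) {p q x : ℝ}
    (hx : x ∈ Set.Icc p q) :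
    |f x - (f p + f q) / 2| ≤ L * (q - p) / 2 := by
  have := abs_sub_convex_comb_le hf hx (μ := 1 / 2) (by norm_num)
  convert this using 2 <;> ring

lemma abs_sub_lineInterp_le (hf : ∀ x y, |f x - f y| ≤ L * |x - y|) {p q x : ℝ}
    (hx : x ∈ Set.Icc p q) :
    |f x - (f p + slope f p q * (x - p))| ≤ L * (q - p) / 2 := by
  rcases hx.1.eq_or_lt with rfl | hpx
  · simpa using div_nonneg (mul_nonneg (nonneg_of_lipschitz hf) (sub_nonneg.2 hx.2)) zero_le_two
  have hs : 0 < q - p := by linarith [hx.2]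
  set μ := (x - p) / (q - p) with hμ_def
  have hμ : μ ∈ Set.Icc (0 : ℝ) 1 :=
    ⟨by positivity, (div_le_one hs).2 (by linarith [hx.2])⟩
  have hline : (1 - μ) * f p + μ * f q = f p + slope f p q * (x - p) := by
    rw [slope_def_field, hμ_def]; field_simp; ring
  have hquad : (1 - μ) * (x - p) + μ * (q - x) ≤ (q - p) / 2 := by
    rw [← sub_nonneg]
    have : (q - p) / 2 - ((1 - μ) * (x - p) + μ * (q - x))
        = (2 * x - p - q) ^ 2 / (2 * (q - p)) := by
      rw [hμ_def]; field_simp; ring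
    rw [this]; positivity
  calc _ ≤ L * ((1 - μ) * (x - p) + μ * (q - x)) := hline ▸ abs_sub_convex_comb_le hf hx hμ
    _ ≤ L * (q - p) / 2 := by
      rw [mul_div_assoc]; exact mul_le_mul_of_nonneg_left hquad (nonneg_of_lipschitz hf)

end Lipschitz

lemma abs_le_of_forall_mem_Icc {e : ℝ → ℝ} {p q δ : ℝ} (hpq : p ≤ q)
    (hl : ∀ x ≤ p, e x = e p) (hr : ∀ x, q ≤ x → e x = e q)
    (h : ∀ x ∈ Set.Icc p q, |e x| ≤ δ) (x : ℝ) : |e x| ≤ δ := by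
  rcases le_total x p with hxp | hpx
  · rw [hl x hxp]; exact h p ⟨le_rfl, hpq⟩
  rcases le_total q x with hqx | hxq
  · rw [hr x hqx]; exact h q ⟨hpq, le_rfl⟩
  exact h x ⟨hpx, hxq⟩

lemma abs_sub_midpoint_le_of_const_outside {f : ℝ → ℝ} {L a b : ℝ}
    (hf : ∀ x y, |f x - f y| ≤ L * |x - y|) (hab : a ≤ b) (hl : ∀ x ≤ a, f x = f a)
    (hr : ∀ x, b ≤ x → f x = f b) (x : ℝ) : |f x - (f a + f b) / 2| ≤ L * (b - a) / 2 :=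
  abs_le_of_forall_mem_Icc (e := fun x => f x - (f a + f b) / 2) hab
    (fun x hx => by simp only [hl x hx]) (fun x hx => by simp only [hr x hx])
    (fun _ hx => abs_sub_midpoint_le hf hx) x

lemma exists_lt_mem_Icc (t : ℕ → ℝ) {x : ℝ} :
    ∀ {n : ℕ}, 0 < n → t 0 ≤ x → x ≤ t n → ∃ j < n, x ∈ Set.Icc (t j) (t (j + 1))
  | 1, _, h0, h1 => ⟨0, one_pos, h0, h1⟩
  | n + 2, _, h0, hx => by
    by_cases h : x ≤ t (n + 1)
    · obtain ⟨j, hj, hjx⟩ := exists_lt_mem_Icc t n.succ_pos h0 h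
      exact ⟨j, hj.trans n.succ.lt_succ_self, hjx⟩
    · exact ⟨n + 1, (n + 1).lt_succ_self, le_of_not_ge h, hx⟩

noncomputable def pwLinInterp (f : ℝ → ℝ) (t : ℕ → ℝ) (n : ℕ) (x : ℝ) : ℝ :=
  f (t 0) + ∑ i ∈ range n, slope f (t i) (t (i + 1)) * ramp (t i) (t (i + 1)) x

section PwLinInterp

variable {f : ℝ → ℝ} {t : ℕ → ℝ} {n : ℕ} {x : ℝ}

lemma sum_slope_mul_ramp_of_le (ht : Monotone t) {j : ℕ} (hx : t j ≤ x) :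
    ∑ i ∈ range j, slope f (t i) (t (i + 1)) * ramp (t i) (t (i + 1)) x
      = f (t j) - f (t 0) := by
  rw [← sum_range_sub (fun i => f (t i))]
  refine sum_congr rfl fun i hi => ?_
  rw [ramp_of_ge (ht i.le_succ) ((ht (mem_range.1 hi)).trans hx), mul_comm]
  exact sub_smul_slope f _ _

lemma pwLinInterp_of_le (ht : Monotone t) (hx : x ≤ t 0) : pwLinInterp f t n x = f (t 0) := by
  refine add_eq_left.2 (sum_eq_zero fun i _ => ?_)
  rw [ramp_of_le (hx.trans (ht (Nat.zero_le i))) (ht i.le_succ), mul_zero]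

lemma pwLinInterp_of_ge (ht : Monotone t) (hx : t n ≤ x) : pwLinInterp f t n x = f (t n) := by
  rw [pwLinInterp, sum_slope_mul_ramp_of_le ht hx, add_sub_cancel]

lemma pwLinInterp_of_mem_Icc (ht : Monotone t) {j : ℕ} (hj : j < n)
    (hx : x ∈ Set.Icc (t j) (t (j + 1))) :
    pwLinInterp f t n x = f (t j) + slope f (t j) (t (j + 1)) * (x - t j) := by
  have hright : ∑ i ∈ Ico (j + 1) n, slope f (t i) (t (i + 1)) * ramp (t i) (t (i + 1)) x = 0 :=
    sum_eq_zero fun i hi => by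
      rw [ramp_of_le (hx.2.trans (ht (mem_Ico.1 hi).1)) (ht i.le_succ), mul_zero]
  rw [pwLinInterp, ← sum_range_add_sum_Ico _ hj, hright, add_zero, sum_range_succ,
    sum_slope_mul_ramp_of_le ht hx.1, ramp_of_mem_Icc hx]
  ring

lemma abs_pwLinInterp_sub_le {L : ℝ} (hf : ∀ x y, |f x - f y| ≤ L * |x - y|) (ht : Monotone t)
    (x y : ℝ) :
    |pwLinInterp f t n x - pwLinInterp f t n y| ≤ L * |x - y| := by
  rw [pwLinInterp, pwLinInterp, add_sub_add_left_eq_sub]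
  exact abs_sum_mul_ramp_sub_le ht (nonneg_of_lipschitz hf) (fun i _ => abs_slope_le hf _ _) x y

lemma abs_sub_pwLinInterp_le {L : ℝ} (hf : ∀ x y, |f x - f y| ≤ L * |x - y|) (ht : Monotone t)
    (hn : 0 < n) (hl : ∀ x ≤ t 0, f x = f (t 0)) (hr : ∀ x, t n ≤ x → f x = f (t n))
    {h : ℝ} (hmesh : ∀ i < n, t (i + 1) - t i ≤ h) (x : ℝ) :
    |f x - pwLinInterp f t n x| ≤ L * h / 2 := by
  refine abs_le_of_forall_mem_Icc (e := fun x => f x - pwLinInterp f t n x) (ht (Nat.zero_le n))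
    (fun x hx => by rw [hl x hx, pwLinInterp_of_le ht hx, pwLinInterp_of_le ht le_rfl])
    (fun x hx => by rw [hr x hx, pwLinInterp_of_ge ht hx, pwLinInterp_of_ge ht le_rfl])
    (fun x hx => ?_) x
  obtain ⟨j, hj, hjx⟩ := exists_lt_mem_Icc t hn hx.1 hx.2
  rw [pwLinInterp_of_mem_Icc ht hj hjx]
  calc _ ≤ L * (t (j + 1) - t j) / 2 := abs_sub_lineInterp_le hf hjx
    _ ≤ L * h / 2 := by gcongr; exacts [nonneg_of_lipschitz hf, hmesh j hj]

end PwLinInterp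

noncomputable def reluNet {w : ℕ} (a : ℝ) (α β : Fin w → ℝ) (x : ℝ) : ℝ :=
  a + ∑ i, α i * max 0 (x - β i)

/-- The jump of the slope `c` at the `i`-th of the knots `0, …, n`, the slope being `0` before
knot `0` and after knot `n`. -/
def reluCoeff (c : ℕ → ℝ) (n i : ℕ) : ℝ :=
  (if i < n then c i else 0) - if i = 0 then 0 else c (i - 1)

lemma sum_range_reluCoeff_mul (c g : ℕ → ℝ) (n : ℕ) :
    ∑ i ∈ range (n + 1), reluCoeff c n i * g i
      = ∑ i ∈ range n, c i * (g i - g (i + 1)) := by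
  simp only [reluCoeff, sub_mul, sum_sub_distrib, mul_sub]
  rw [sum_range_succ, sum_range_succ']
  simp only [lt_irrefl, if_false, zero_mul, add_zero, Nat.succ_ne_zero, add_tsub_cancel_right,
    if_true]
  congr 1
  exact sum_congr rfl fun i hi => by rw [if_pos (mem_range.1 hi)]

lemma abs_reluCoeff_le {c : ℕ → ℝ} {L : ℝ} (hc : ∀ i, |c i| ≤ L) (n i : ℕ) :
    |reluCoeff c n i| ≤ 2 * L := by
  have hL : 0 ≤ L := (abs_nonneg _).trans (hc 0)
  refine (abs_sub _ _).trans ?_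
  rw [two_mul]
  gcongr <;> split_ifs <;> simp [hc, hL]

lemma pwLinInterp_eq_reluNet (f : ℝ → ℝ) (t : ℕ → ℝ) (n : ℕ) (x : ℝ) :
    pwLinInterp f t n x = reluNet (f (t 0))
      (fun i : Fin (n + 1) => reluCoeff (fun i => slope f (t i) (t (i + 1))) n i)
      (fun i => t i) x := by
  rw [reluNet, Fin.sum_univ_eq_sum_range (fun i => _ * max 0 (x - t i)),
    sum_range_reluCoeff_mul]
  rfl

theorem exists_reluNet_approx {f : ℝ → ℝ} {L a b : ℝ}
    (hf : ∀ x y, |f x - f y| ≤ L * |x - y|) (hab : a ≤ b) (hl : ∀ x ≤ a, f x = f a)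
    (hr : ∀ x, b ≤ x → f x = f b) {n : ℕ} (hn : 0 < n) :
    ∃ α β : Fin (n + 1) → ℝ, (∀ i, |α i| ≤ 2 * L) ∧
      (∀ x y, |reluNet (f a) α β x - reluNet (f a) α β y| ≤ L * |x - y|) ∧
      ∀ x, |f x - reluNet (f a) α β x| ≤ L * ((b - a) / n) / 2 := by
  set t : ℕ → ℝ := fun i => a + i * ((b - a) / n)
  have ht : Monotone t := fun i j hij => by
    have : 0 ≤ (b - a) / n := div_nonneg (sub_nonneg.2 hab) n.cast_nonneg
    simp only [t]; gcongr
  have ht0 : t 0 = a := by simp [t]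
  have htn : t n = b := by
    have : (n : ℝ) ≠ 0 := by positivity
    simp [t, mul_div_cancel₀ _ this]
  have hstep : ∀ i, t (i + 1) - t i = (b - a) / n := fun i => by simp only [t]; push_cast; ring
  refine ⟨fun i => reluCoeff (fun i => slope f (t i) (t (i + 1))) n i, fun i => t i,
    fun i => abs_reluCoeff_le (fun i => abs_slope_le hf _ _) n i, ?_⟩
  simp only [← ht0, ← pwLinInterp_eq_reluNet]
  rw [← ht0] at hl
  rw [← htn] at hr
  exact ⟨abs_pwLinInterp_sub_le hf ht,
    abs_sub_pwLinInterp_le hf ht hn hl hr fun i _ => by rw [hstep, ht0]⟩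

theorem stmt6_general (L δ R : ℝ) (hδ : 0 < δ) (hR : 0 < R)
    (f : ℝ → ℝ) (hf : ∀ x y, |f x - f y| ≤ L * |x - y|)
    (hleft : ∀ x ≤ -R, f x = f (-R)) (hright : ∀ x, R ≤ x → f x = f R) :
    ∃ (w : ℕ) (a : ℝ) (α β : Fin w → ℝ),
      (w : ℝ) ≤ 3 * R * L / δ ∧
      (∀ i, |α i| ≤ 2 * L) ∧
      (∀ x y, |(a + ∑ i, α i * max 0 (x - β i)) - (a + ∑ i, α i * max 0 (y - β i))|
          ≤ L * |x - y|) ∧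
      (∀ x, |f x - (a + ∑ i, α i * max 0 (x - β i))| ≤ δ) := by
  have hL : 0 ≤ L := nonneg_of_lipschitz hf
  rcases lt_or_ge (R * L) δ with hsmall | hlarge
  · refine ⟨0, (f (-R) + f R) / 2, ![], ![], by simp; positivity, fun i => i.elim0,
      fun x y => by simpa using by positivity, fun x => ?_⟩
    simpa using (abs_sub_midpoint_le_of_const_outside hf (by linarith) hleft hright x).trans
      (by linarith)
  · set n := ⌈R * L / δ⌉₊
    have hn : R * L / δ ≤ n := Nat.le_ceil _
    have hn1 : (n : ℝ) < R * L / δ + 1 := Nat.ceil_lt_add_one (by positivity)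
    have hRLδ : 1 ≤ R * L / δ := (one_le_div hδ).2 hlarge
    have hnpos : 0 < n := by exact_mod_cast (by linarith : (0 : ℝ) < n)
    obtain ⟨α, β, hα, hlip, herr⟩ :=
      exists_reluNet_approx hf (by linarith) hleft hright hnpos
    refine ⟨n + 1, f (-R), α, β, ?_, hα, hlip, fun x => (herr x).trans ?_⟩
    · rw [mul_assoc, mul_div_assoc]; push_cast; linarith
    · calc L * ((R - -R) / n) / 2 = R * L / n := by ring
        _ ≤ δ := (div_le_iff₀ (by positivity)).2 (by linarith [(div_le_iff₀ hδ).1 hn])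

/-- ReLU approximation of Lipschitz functions: any `L`-Lipschitz `f` constant outside
`[−R,R]` is `δ`-approximated in sup norm by an `L`-Lipschitz function of the form
`x ↦ a + ∑_{i<w} α_i · max 0 (x − β_i)` with `w ≤ 3RL/δ` and `|α_i| ≤ 2L`. -/
theorem stmt6 (L δ R : ℝ) (hL : 0 < L) (hδ : 0 < δ) (hR : 0 < R)
    (f : ℝ → ℝ) (hf : ∀ x y, |f x - f y| ≤ L * |x - y|)
    (hleft : ∀ x ≤ -R, f x = f (-R)) (hright : ∀ x, R ≤ x → f x = f R) :
    ∃ (w : ℕ) (a : ℝ) (α β : Fin w → ℝ),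
      (w : ℝ) ≤ 3 * R * L / δ ∧
      (∀ i, |α i| ≤ 2 * L) ∧
      (∀ x y, |(a + ∑ i, α i * max 0 (x - β i)) - (a + ∑ i, α i * max 0 (y - β i))|
          ≤ L * |x - y|) ∧
      (∀ x, |f x - (a + ∑ i, α i * max 0 (x - β i))| ≤ δ) :=
  stmt6_general L δ R hδ hR f hf hleft hright
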